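/- Let p ∈ (0,1), q = 1 − p, and let P be the law of n i.i.d. Bernoulli(p) random variables on {0,1}^n. Let f : {0,1}^n → ℝ be any function for which there exists c > 0 such that max_{1 ≤ i ≤ n} |f(x ⊕ e_i) − f(x)| ≤ c for all x ∈ {0,1}^n. For f : {0,1}^n → ℝ define Γf(x) = sqrt(Σ_{i=1}^n (f(x ⊕ e_i) − f(x))²), where e_i ∈ {0,1}^n has a 1 in position i and zeros elsewhere and ⊕ is componentwise modulo-2 addition. Then D(P^{(f)} ‖ P) ≤ pq · ((c−1)e^c + 1)/c² · E_P^{(f)}[(Γf)²]. -/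

import Mathlib

/-!
With `h = exp f`, the divergence `D(P^{(f)} ‖ P)` is `Ent_P(h) / E_P[h]`, where
`Ent(h) = E[h log h] - E[h] log E[h]`. Entropy tensorizes over the product measure: peeling off
one coordinate, `Ent(h)` is the expected two-point entropy in that coordinate plus the entropy of
the averaged function, and joint convexity of the two-point entropy `ent2` pushes the remaining
coordinates back inside. The two-point entropy of `(eᵘ, eᵛ)` is the mean times the divergence of
the `d`-tilted Bernoulli law, `d = v - u`, and that divergence is at most `pq ψ(|d|)` with
`ψ(u) = (u - 1)eᵘ + 1`: for `d ≥ 0` the gap has derivative `pq d eᵈ (1 - A⁻²) ≥ 0`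
(`A = p eᵈ + q ≥ 1`), and `d ↦ -d`, `p ↦ q` is a symmetry. Finally `ψ(u)/u²` is increasing, so
`ψ(|d|) ≤ ψ(c) d²/c²` when `|d| ≤ c`.
-/

open MeasureTheory ProbabilityTheory
open scoped ENNReal NNReal Classical

/-- The relative entropy (Kullback–Leibler divergence) `D(Q‖P)`, equal to
`∫ ln(dQ/dP) dQ` when `Q ≪ P` (and the log-likelihood ratio is integrable), and `+∞`
otherwise. -/
noncomputable def relEnt {α : Type*} [MeasurableSpace α] (Q P : Measure α) : ℝ≥0∞ :=
  if Q ≪ P ∧ Integrable (fun x => Real.log (Q.rnDeriv P x).toReal) Q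
  then ENNReal.ofReal (∫ x, Real.log (Q.rnDeriv P x).toReal ∂Q) else ⊤

/-- The Bernoulli(p) probability measure on `Bool` (`true` has probability `p`). -/
noncomputable def bernoulliMeasure (p : ℝ) : Measure Bool :=
  ENNReal.ofReal p • Measure.dirac true + ENNReal.ofReal (1 - p) • Measure.dirac false

lemma relEnt_tilted_self {α : Type*} [MeasurableSpace α] {μ : Measure α} [SigmaFinite μ]
    [NeZero μ] {f : α → ℝ} (hf : Integrable (fun x => Real.exp (f x)) μ)
    (hfi : Integrable f (μ.tilted f)) :
    relEnt (μ.tilted f) μ =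
      ENNReal.ofReal (∫ x, f x ∂(μ.tilted f) - Real.log (∫ x, Real.exp (f x) ∂μ)) := by
  have := isProbabilityMeasure_tilted hf
  have hae := (tilted_absolutelyContinuous μ f).ae_eq (log_rnDeriv_tilted_left_self hf)
  have hint := hfi.sub (integrable_const (Real.log (∫ x, Real.exp (f x) ∂μ)))
  rw [relEnt, if_pos ⟨tilted_absolutelyContinuous μ f, hint.congr hae.symm⟩,
    integral_congr_ae hae, integral_sub hfi (integrable_const _), integral_const, probReal_univ,
    one_smul]

noncomputable section

namespace BernoulliLSI

open Real Function

lemma monotoneOn_of_hasDerivAt_nonneg {D : Set ℝ} (hD : Convex ℝ D) {f f' : ℝ → ℝ}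
    (hf : ∀ x ∈ D, HasDerivAt f (f' x) x) (hf' : ∀ x ∈ interior D, 0 ≤ f' x) :
    MonotoneOn f D :=
  monotoneOn_of_hasDerivWithinAt_nonneg hD
    (fun x hx => (hf x hx).continuousAt.continuousWithinAt)
    (fun x hx => (hf x (interior_subset hx)).hasDerivWithinAt) hf'

def psi (u : ℝ) : ℝ := (u - 1) * exp u + 1

lemma hasDerivAt_psi (u : ℝ) : HasDerivAt psi (u * exp u) u := by
  refine ((((hasDerivAt_id' u).sub_const 1).mul (hasDerivAt_exp u)).add_const 1).congr_deriv ?_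
  ring

lemma psi_zero : psi 0 = 0 := by
  simp [psi]

lemma two_mul_psi_le_sq_mul_exp {u : ℝ} (hu : 0 ≤ u) : 2 * psi u ≤ u ^ 2 * exp u := by
  have hmono : MonotoneOn (fun u => u ^ 2 * exp u - 2 * psi u) (Set.Ici 0) := by
    refine monotoneOn_of_hasDerivAt_nonneg (convex_Ici 0) (f' := fun u => u ^ 2 * exp u)
      (fun x _ => ?_) (fun x _ => by positivity)
    refine (((hasDerivAt_pow 2 x).mul (hasDerivAt_exp x)).sub
      ((hasDerivAt_psi x).const_mul 2)).congr_deriv ?_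
    norm_num
    ring
  simpa [psi_zero] using hmono Set.self_mem_Ici hu hu

lemma psi_div_sq_monotoneOn : MonotoneOn (fun u => psi u / u ^ 2) (Set.Ioi 0) := by
  refine monotoneOn_of_hasDerivAt_nonneg (convex_Ioi 0)
    (f' := fun u => u * (u ^ 2 * exp u - 2 * psi u) / (u ^ 2) ^ 2) (fun x hx => ?_)
    (fun x hx => ?_)
  · refine ((hasDerivAt_psi x).div (hasDerivAt_pow 2 x)
      (pow_ne_zero 2 (ne_of_gt hx))).congr_deriv ?_
    norm_num
    ring
  · rw [interior_Ioi] at hx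
    have := two_mul_psi_le_sq_mul_exp hx.le
    have : 0 ≤ x * (x ^ 2 * exp x - 2 * psi x) := mul_nonneg hx.le (by linarith)
    positivity

lemma psi_abs_le {c d : ℝ} (hd : |d| ≤ c) : psi |d| ≤ psi c / c ^ 2 * d ^ 2 := by
  rcases eq_or_ne d 0 with rfl | hd0
  · simp [psi_zero]
  have hd' : 0 < |d| := abs_pos.mpr hd0
  have := psi_div_sq_monotoneOn hd' (hd'.trans_le hd) hd
  simp only at this
  rwa [sq_abs, div_le_iff₀ (by positivity)] at this

/-- `D(Ber(p)^{(g)} ‖ Ber(p))` for the tilt `g x = d x`. -/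
def tiltKL (p d : ℝ) : ℝ :=
  p * d * exp d / (p * exp d + (1 - p)) - log (p * exp d + (1 - p))

variable {p : ℝ}

lemma convexComb_pos (hp0 : 0 ≤ p) (hp1 : p ≤ 1) {a b : ℝ} (ha : 0 < a) (hb : 0 < b) :
    0 < (1 - p) * a + p * b := by
  rcases hp1.lt_or_eq with hp1 | rfl
  · have : 0 < 1 - p := by linarith
    positivity
  · simpa using hb

lemma mgf_pos (hp0 : 0 ≤ p) (hp1 : p ≤ 1) (d : ℝ) : 0 < p * exp d + (1 - p) := by
  simpa [add_comm, mul_comm] using convexComb_pos hp0 hp1 one_pos (exp_pos d)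

lemma hasDerivAt_tiltKL (hp0 : 0 ≤ p) (hp1 : p ≤ 1) (d : ℝ) :
    HasDerivAt (tiltKL p) (p * (1 - p) * d * exp d / (p * exp d + (1 - p)) ^ 2) d := by
  have hA := mgf_pos hp0 hp1 d
  have hmgf : HasDerivAt (fun d => p * exp d + (1 - p)) (p * exp d) d :=
    ((hasDerivAt_exp d).const_mul p).add_const _
  refine (((((hasDerivAt_id d).const_mul p).mul (hasDerivAt_exp d)).div hmgf hA.ne').sub
    (hmgf.log hA.ne')).congr_deriv ?_
  simp only [id, Pi.mul_apply]
  field_simp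
  ring

lemma tiltKL_zero (p : ℝ) : tiltKL p 0 = 0 := by
  simp [tiltKL]

lemma tiltKL_le_of_nonneg (hp0 : 0 ≤ p) (hp1 : p ≤ 1) {d : ℝ} (hd : 0 ≤ d) :
    tiltKL p d ≤ p * (1 - p) * psi d := by
  have hmono : MonotoneOn (fun t => p * (1 - p) * psi t - tiltKL p t) (Set.Ici 0) := by
    refine monotoneOn_of_hasDerivAt_nonneg (convex_Ici 0)
      (f' := fun t => p * (1 - p) * (t * exp t) * (1 - 1 / (p * exp t + (1 - p)) ^ 2))
      (fun t _ => ?_) (fun t ht => ?_)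
    · have hA := mgf_pos hp0 hp1 t
      refine (((hasDerivAt_psi t).const_mul _).sub (hasDerivAt_tiltKL hp0 hp1 t)).congr_deriv ?_
      field_simp
    · rw [interior_Ici, Set.mem_Ioi] at ht
      have hA : 1 ≤ p * exp t + (1 - p) := by
        nlinarith [one_le_exp ht.le]
      have hinv : 1 / (p * exp t + (1 - p)) ^ 2 ≤ 1 :=
        div_le_one_of_le₀ (one_le_pow₀ hA) (by positivity)
      exact mul_nonneg (mul_nonneg (mul_nonneg hp0 (by linarith)) (by positivity))
        (sub_nonneg.2 hinv)
  have := hmono Set.self_mem_Ici hd hd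
  simpa [psi_zero, tiltKL_zero] using this

lemma tiltKL_neg (hp0 : 0 ≤ p) (hp1 : p ≤ 1) (d : ℝ) : tiltKL p (-d) = tiltKL (1 - p) d := by
  have hA := mgf_pos (p := 1 - p) (by linarith) (by linarith) d
  rw [sub_sub_cancel] at hA
  have hsplit : p * exp (-d) + (1 - p) = exp (-d) * ((1 - p) * exp d + p) := by
    rw [exp_neg]
    field_simp
    ring
  rw [tiltKL, tiltKL, sub_sub_cancel, hsplit, log_mul (exp_pos _).ne' hA.ne', log_exp, exp_neg]
  have key : (1 - p) * d * exp d / ((1 - p) * exp d + p) = d - p * d / ((1 - p) * exp d + p) := by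
    rw [eq_sub_iff_add_eq, ← add_div, div_eq_iff hA.ne']
    ring
  rw [key]
  field_simp
  ring

lemma tiltKL_le (hp0 : 0 ≤ p) (hp1 : p ≤ 1) (d : ℝ) : tiltKL p d ≤ p * (1 - p) * psi |d| := by
  rcases le_total 0 d with hd | hd
  · rw [abs_of_nonneg hd]
    exact tiltKL_le_of_nonneg hp0 hp1 hd
  · rw [abs_of_nonpos hd, ← neg_neg d, tiltKL_neg hp0 hp1, neg_neg]
    have := tiltKL_le_of_nonneg (p := 1 - p) (by linarith) (by linarith) (neg_nonneg.mpr hd)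
    linarith

lemma tiltKL_le_of_abs_le (hp0 : 0 ≤ p) (hp1 : p ≤ 1) {c d : ℝ} (hd : |d| ≤ c) :
    tiltKL p d ≤ p * (1 - p) * (psi c / c ^ 2) * d ^ 2 := by
  have hpq : 0 ≤ p * (1 - p) := mul_nonneg hp0 (by linarith)
  calc tiltKL p d ≤ p * (1 - p) * psi |d| := tiltKL_le hp0 hp1 d
    _ ≤ p * (1 - p) * (psi c / c ^ 2 * d ^ 2) := by gcongr; exact psi_abs_le hd
    _ = p * (1 - p) * (psi c / c ^ 2) * d ^ 2 := by ring

/-- The entropy under Bernoulli(p) of the function `false ↦ a`, `true ↦ b`. -/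
def ent2 (p a b : ℝ) : ℝ :=
  (1 - p) * (a * log a) + p * (b * log b) - ((1 - p) * a + p * b) * log ((1 - p) * a + p * b)

lemma ent2_exp_eq (hp0 : 0 ≤ p) (hp1 : p ≤ 1) (u v : ℝ) :
    ent2 p (exp u) (exp v) = ((1 - p) * exp u + p * exp v) * tiltKL p (v - u) := by
  have hA := mgf_pos hp0 hp1 (v - u)
  have hv : exp v = exp u * exp (v - u) := by rw [← exp_add, add_sub_cancel]
  have hm : (1 - p) * exp u + p * exp v = exp u * (p * exp (v - u) + (1 - p)) := by
    rw [hv]; ring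
  rw [ent2, tiltKL, hm, log_mul (exp_pos u).ne' hA.ne', log_exp, log_exp, hv]
  field_simp
  ring

lemma ent2_exp_le (hp0 : 0 ≤ p) (hp1 : p ≤ 1) {c u v : ℝ} (huv : |v - u| ≤ c) :
    ent2 p (exp u) (exp v) ≤
      p * (1 - p) * (psi c / c ^ 2) * (v - u) ^ 2 * ((1 - p) * exp u + p * exp v) := by
  rw [ent2_exp_eq hp0 hp1, mul_comm]
  exact mul_le_mul_of_nonneg_right (tiltKL_le_of_abs_le hp0 hp1 huv)
    (convexComb_pos hp0 hp1 (exp_pos u) (exp_pos v)).le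

lemma mul_log_div_convexComb_le (hp0 : 0 ≤ p) (hp1 : p ≤ 1) {x₀ x₁ y₀ y₁ : ℝ}
    (hx₀ : 0 ≤ x₀) (hx₁ : 0 ≤ x₁) (hy₀ : 0 < y₀) (hy₁ : 0 < y₁) :
    ((1 - p) * x₀ + p * x₁) * log (((1 - p) * x₀ + p * x₁) / ((1 - p) * y₀ + p * y₁)) ≤
      (1 - p) * (x₀ * log (x₀ / y₀)) + p * (x₁ * log (x₁ / y₁)) := by
  have hq : 0 ≤ 1 - p := by linarith
  set Y := (1 - p) * y₀ + p * y₁ with hYdef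
  have hY : 0 < Y := convexComb_pos hp0 hp1 hy₀ hy₁
  have h := convexOn_mul_log.2 (Set.mem_Ici.2 (div_nonneg hx₀ hy₀.le))
    (Set.mem_Ici.2 (div_nonneg hx₁ hy₁.le)) (by positivity : 0 ≤ (1 - p) * y₀ / Y)
    (by positivity : 0 ≤ p * y₁ / Y) (by rw [← add_div, ← hYdef, div_self hY.ne'])
  have hmix : (1 - p) * y₀ / Y * (x₀ / y₀) + p * y₁ / Y * (x₁ / y₁) =
      ((1 - p) * x₀ + p * x₁) / Y := by
    field_simp
  simp only [smul_eq_mul, hmix] at h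
  calc ((1 - p) * x₀ + p * x₁) * log (((1 - p) * x₀ + p * x₁) / Y)
      = Y * (((1 - p) * x₀ + p * x₁) / Y * log (((1 - p) * x₀ + p * x₁) / Y)) := by
        field_simp
    _ ≤ Y * ((1 - p) * y₀ / Y * (x₀ / y₀ * log (x₀ / y₀))
        + p * y₁ / Y * (x₁ / y₁ * log (x₁ / y₁))) := by gcongr
    _ = (1 - p) * (x₀ * log (x₀ / y₀)) + p * (x₁ * log (x₁ / y₁)) := by
        field_simp

lemma ent2_eq_mul_log_div (hp0 : 0 ≤ p) (hp1 : p ≤ 1) {a b : ℝ} (ha : 0 < a) (hb : 0 < b) :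
    ent2 p a b = (1 - p) * (a * log (a / ((1 - p) * a + p * b)))
      + p * (b * log (b / ((1 - p) * a + p * b))) := by
  have hm := convexComb_pos hp0 hp1 ha hb
  rw [ent2, log_div ha.ne' hm.ne', log_div hb.ne' hm.ne']
  ring

lemma ent2_convexComb_le (hp0 : 0 ≤ p) (hp1 : p ≤ 1) {a₀ a₁ b₀ b₁ : ℝ}
    (ha₀ : 0 < a₀) (ha₁ : 0 < a₁) (hb₀ : 0 < b₀) (hb₁ : 0 < b₁) :
    ent2 p ((1 - p) * a₀ + p * a₁) ((1 - p) * b₀ + p * b₁) ≤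
      (1 - p) * ent2 p a₀ b₀ + p * ent2 p a₁ b₁ := by
  have hq : 0 ≤ 1 - p := by linarith
  have hm : (1 - p) * ((1 - p) * a₀ + p * a₁) + p * ((1 - p) * b₀ + p * b₁) =
      (1 - p) * ((1 - p) * a₀ + p * b₀) + p * ((1 - p) * a₁ + p * b₁) := by ring
  have hm₀ := convexComb_pos hp0 hp1 ha₀ hb₀
  have hm₁ := convexComb_pos hp0 hp1 ha₁ hb₁
  rw [ent2_eq_mul_log_div hp0 hp1 (convexComb_pos hp0 hp1 ha₀ ha₁)
      (convexComb_pos hp0 hp1 hb₀ hb₁), hm,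
    ent2_eq_mul_log_div hp0 hp1 ha₀ hb₀, ent2_eq_mul_log_div hp0 hp1 ha₁ hb₁]
  have ha := mul_log_div_convexComb_le hp0 hp1 ha₀.le ha₁.le hm₀ hm₁
  have hb := mul_log_div_convexComb_le hp0 hp1 hb₀.le hb₁.le hm₀ hm₁
  linarith [mul_le_mul_of_nonneg_left ha hq, mul_le_mul_of_nonneg_left hb hp0]

def weight (p : ℝ) {n : ℕ} (x : Fin n → Bool) : ℝ := ∏ i, if x i then p else 1 - p

def expect (p : ℝ) {n : ℕ} (h : (Fin n → Bool) → ℝ) : ℝ := ∑ x, weight p x * h x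

def ent (p : ℝ) {n : ℕ} (h : (Fin n → Bool) → ℝ) : ℝ :=
  expect p (fun x => h x * log (h x)) - expect p h * log (expect p h)

variable {n : ℕ}

lemma weight_nonneg (hp0 : 0 ≤ p) (hp1 : p ≤ 1) (x : Fin n → Bool) : 0 ≤ weight p x :=
  Finset.prod_nonneg fun i _ => by split_ifs <;> linarith

lemma weight_insertNth (i : Fin (n + 1)) (b : Bool) (y : Fin n → Bool) :
    weight p (i.insertNth b y) = (if b then p else 1 - p) * weight p y := by
  simp [weight, Fin.prod_univ_succAbove _ i]

lemma expect_sub (F G : (Fin n → Bool) → ℝ) :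
    expect p (fun x => F x - G x) = expect p F - expect p G := by
  simp only [expect, mul_sub, Finset.sum_sub_distrib]

lemma expect_mono (hp0 : 0 ≤ p) (hp1 : p ≤ 1) {F G : (Fin n → Bool) → ℝ} (h : ∀ x, F x ≤ G x) :
    expect p F ≤ expect p G :=
  Finset.sum_le_sum fun x _ => mul_le_mul_of_nonneg_left (h x) (weight_nonneg hp0 hp1 x)

lemma expect_insertNth (i : Fin (n + 1)) (F : (Fin (n + 1) → Bool) → ℝ) :
    expect p F =
      expect p (fun y => (1 - p) * F (i.insertNth false y) + p * F (i.insertNth true y)) := by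
  simp only [expect]
  rw [← (Fin.insertNthEquiv (fun _ => Bool) i).sum_comp, Fintype.sum_prod_type,
    Fintype.sum_bool, ← Finset.sum_add_distrib]
  refine Finset.sum_congr rfl fun y _ => ?_
  simp only [Fin.insertNthEquiv, Equiv.coe_fn_mk, weight_insertNth, Bool.false_eq_true,
    ↓reduceIte]
  ring

lemma expect_cons (F : (Fin (n + 1) → Bool) → ℝ) :
    expect p F = expect p (fun y => (1 - p) * F (Fin.cons false y) + p * F (Fin.cons true y)) := by
  simpa only [Fin.insertNth_zero'] using expect_insertNth 0 F

lemma expect_update_convexComb (i : Fin n) (χ : (Fin n → Bool) → ℝ) :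
    expect p (fun x => (1 - p) * χ (update x i false) + p * χ (update x i true))
      = expect p χ := by
  cases n with
  | zero => exact i.elim0
  | succ n =>
    rw [expect_insertNth i, expect_insertNth i χ]
    simp only [Fin.update_insertNth]
    congr 1
    funext y
    ring

lemma ent_cons (h : (Fin (n + 1) → Bool) → ℝ) :
    ent p h = expect p (fun y => ent2 p (h (Fin.cons false y)) (h (Fin.cons true y)))
      + ent p (fun y => (1 - p) * h (Fin.cons false y) + p * h (Fin.cons true y)) := by
  simp only [ent, ent2]
  rw [expect_cons (fun x => h x * log (h x)), expect_cons h, expect_sub]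
  ring

lemma expect_ent2_convexComb_le (hp0 : 0 ≤ p) (hp1 : p ≤ 1) {h : (Fin (n + 1) → Bool) → ℝ}
    (hpos : ∀ x, 0 < h x) (i : Fin n) :
    expect p (fun y =>
        ent2 p ((1 - p) * h (Fin.cons false (update y i false))
            + p * h (Fin.cons true (update y i false)))
          ((1 - p) * h (Fin.cons false (update y i true))
            + p * h (Fin.cons true (update y i true)))) ≤
      expect p (fun x =>
        ent2 p (h (update x i.succ false)) (h (update x i.succ true))) := by
  rw [expect_cons (fun x => ent2 p _ _)]
  refine expect_mono hp0 hp1 fun y => ?_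
  simp only [← Fin.cons_update]
  exact ent2_convexComb_le hp0 hp1 (hpos _) (hpos _) (hpos _) (hpos _)

lemma expect_ent2_cons (h : (Fin (n + 1) → Bool) → ℝ) :
    expect p (fun y => ent2 p (h (Fin.cons false y)) (h (Fin.cons true y))) =
      expect p (fun x => ent2 p (h (update x 0 false)) (h (update x 0 true))) := by
  rw [expect_cons (fun x => ent2 p _ _)]
  simp only [Fin.update_cons_zero]
  congr 1
  funext y
  ring

theorem ent_le_sum_expect_ent2 (hp0 : 0 ≤ p) (hp1 : p ≤ 1) :
    ∀ {n : ℕ} (h : (Fin n → Bool) → ℝ), (∀ x, 0 < h x) →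
      ent p h ≤ ∑ i, expect p (fun x =>
        ent2 p (h (update x i false)) (h (update x i true)))
  | 0, h, _ => by simp [ent, expect, weight]
  | n + 1, h, hpos => by
    have hH : ∀ y, 0 < (1 - p) * h (Fin.cons false y) + p * h (Fin.cons true y) := fun y =>
      convexComb_pos hp0 hp1 (hpos _) (hpos _)
    rw [ent_cons, Fin.sum_univ_succ, expect_ent2_cons]
    gcongr
    exact (ent_le_sum_expect_ent2 hp0 hp1 _ hH).trans
      (Finset.sum_le_sum fun i _ => expect_ent2_convexComb_le hp0 hp1 hpos i)

lemma sq_update_sub_eq (f : (Fin n → Bool) → ℝ) (x : Fin n → Bool) (i : Fin n) :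
    (f (update x i true) - f (update x i false)) ^ 2 =
      (f (update x i (!x i)) - f x) ^ 2 := by
  cases hxi : x i <;> simp only [Bool.not_false, Bool.not_true] <;>
    rw [← hxi, update_eq_self]
  ring

theorem ent_exp_le (hp0 : 0 ≤ p) (hp1 : p ≤ 1) {c : ℝ} (f : (Fin n → Bool) → ℝ)
    (hflip : ∀ x i, |f (update x i (!x i)) - f x| ≤ c) :
    ent p (fun x => exp (f x)) ≤ p * (1 - p) * (psi c / c ^ 2) *
      expect p (fun x => exp (f x) * ∑ i, (f (update x i (!x i)) - f x) ^ 2) := by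
  set K := p * (1 - p) * (psi c / c ^ 2)
  calc ent p (fun x => exp (f x))
      ≤ ∑ i, expect p (fun x =>
          ent2 p (exp (f (update x i false))) (exp (f (update x i true)))) :=
        ent_le_sum_expect_ent2 hp0 hp1 _ fun x => exp_pos _
    _ ≤ ∑ i, expect p (fun x =>
          K * (f (update x i true) - f (update x i false)) ^ 2 * exp (f x)) := by
        gcongr with i
        conv_rhs => rw [← expect_update_convexComb i]
        refine expect_mono hp0 hp1 fun x => ?_
        have hx := ent2_exp_le hp0 hp1 (by simpa using hflip (update x i false) i)
        simp only [update_idem]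
        linarith
    _ = K * expect p (fun x => exp (f x) * ∑ i, (f (update x i (!x i)) - f x) ^ 2) := by
        simp only [expect, sq_update_sub_eq, Finset.mul_sum]
        rw [Finset.sum_comm]
        refine Finset.sum_congr rfl fun x _ => Finset.sum_congr rfl fun i _ => ?_
        ring

lemma isProbabilityMeasure_bernoulliMeasure (hp0 : 0 ≤ p) (hp1 : p ≤ 1) :
    IsProbabilityMeasure (bernoulliMeasure p) := by
  constructor
  simp only [_root_.bernoulliMeasure, Measure.coe_add, Pi.add_apply, Measure.smul_apply,
    smul_eq_mul, measure_univ, mul_one]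
  rw [← ENNReal.ofReal_add hp0 (by linarith)]
  norm_num

lemma integral_pi_bernoulliMeasure (hp0 : 0 ≤ p) (hp1 : p ≤ 1) (g : (Fin n → Bool) → ℝ) :
    ∫ x, g x ∂(Measure.pi fun _ : Fin n => bernoulliMeasure p) = expect p g := by
  have := isProbabilityMeasure_bernoulliMeasure hp0 hp1
  rw [integral_fintype .of_finite]
  refine Finset.sum_congr rfl fun x _ => ?_
  have hbit : ∀ b, bernoulliMeasure p {b} = ENNReal.ofReal (if b then p else 1 - p) := by
    intro b
    cases b <;> simp [_root_.bernoulliMeasure]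
  rw [smul_eq_mul, measureReal_def, ← Set.univ_pi_singleton, Measure.pi_pi]
  simp only [hbit]
  rw [← ENNReal.ofReal_prod_of_nonneg fun i _ => by split_ifs <;> linarith]
  exact congrArg (· * g x) (ENNReal.toReal_ofReal (weight_nonneg hp0 hp1 x))

lemma integral_tilted_pi_bernoulliMeasure (hp0 : 0 ≤ p) (hp1 : p ≤ 1)
    (f g : (Fin n → Bool) → ℝ) :
    ∫ x, g x ∂((Measure.pi fun _ : Fin n => bernoulliMeasure p).tilted f) =
      expect p (fun x => exp (f x) * g x) / expect p (fun x => exp (f x)) := by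
  rw [integral_tilted, integral_pi_bernoulliMeasure hp0 hp1,
    integral_pi_bernoulliMeasure hp0 hp1]
  simp only [expect, smul_eq_mul, Finset.sum_div]
  refine Finset.sum_congr rfl fun x _ => ?_
  ring

lemma expect_exp_pos (hp0 : 0 ≤ p) (hp1 : p ≤ 1) (f : (Fin n → Bool) → ℝ) :
    0 < expect p (fun x => exp (f x)) := by
  have := isProbabilityMeasure_bernoulliMeasure hp0 hp1
  rw [← integral_pi_bernoulliMeasure hp0 hp1]
  exact integral_exp_pos .of_finite

lemma relEnt_tilted_pi_bernoulliMeasure (hp0 : 0 ≤ p) (hp1 : p ≤ 1) (f : (Fin n → Bool) → ℝ) :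
    relEnt ((Measure.pi fun _ : Fin n => bernoulliMeasure p).tilted f)
        (Measure.pi fun _ : Fin n => bernoulliMeasure p) =
      ENNReal.ofReal (ent p (fun x => exp (f x)) / expect p (fun x => exp (f x))) := by
  have := isProbabilityMeasure_bernoulliMeasure hp0 hp1
  have hZ := expect_exp_pos hp0 hp1 f
  rw [relEnt_tilted_self .of_finite .of_finite, integral_tilted_pi_bernoulliMeasure hp0 hp1,
    integral_pi_bernoulliMeasure hp0 hp1, ent]
  simp only [log_exp]
  congr 1
  field_simp

end BernoulliLSI

end

theorem logSobolev_bernoulli_p_general {n : ℕ} {p : ℝ} (hp0 : 0 < p) (hp1 : p < 1)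
    (f : (Fin n → Bool) → ℝ) {c : ℝ}
    (hflip : ∀ (x : Fin n → Bool) (i : Fin n),
      |f (Function.update x i (!(x i))) - f x| ≤ c) :
    relEnt ((Measure.pi fun _ : Fin n => bernoulliMeasure p).tilted f)
        (Measure.pi fun _ : Fin n => bernoulliMeasure p) ≤
      ENNReal.ofReal (p * (1 - p) * (((c - 1) * Real.exp c + 1) / c^2) *
        ∫ x, ∑ i, (f (Function.update x i (!(x i))) - f x)^2
          ∂((Measure.pi fun _ : Fin n => bernoulliMeasure p).tilted f)) := by
  rw [BernoulliLSI.relEnt_tilted_pi_bernoulliMeasure hp0.le hp1.le,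
    BernoulliLSI.integral_tilted_pi_bernoulliMeasure hp0.le hp1.le, ← mul_div_assoc]
  exact ENNReal.ofReal_le_ofReal <| div_le_div_of_nonneg_right
    (BernoulliLSI.ent_exp_le hp0.le hp1.le f hflip) (BernoulliLSI.expect_exp_pos hp0.le hp1.le f).le

/-- **Log-Sobolev inequality for the asymmetric Bernoulli measure (Ledoux).** Let `P` be the
law of `n` i.i.d. Bernoulli(p) variables on `{0,1}ⁿ`, and let `f` satisfy the bounded bit-flip
condition `|f(x ⊕ eᵢ) - f(x)| ≤ c` for all `x` and `i`. Then
`D(P^{(f)} ‖ P) ≤ pq·((c-1)eᶜ + 1)/c² · E_{P^{(f)}}[(Γf)²]`, where `q = 1 - p` and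
`(Γf)(x)² = ∑ᵢ (f(x ⊕ eᵢ) - f(x))²`. -/
theorem logSobolev_bernoulli_p {n : ℕ} {p : ℝ} (hp0 : 0 < p) (hp1 : p < 1)
    (f : (Fin n → Bool) → ℝ) {c : ℝ} (hc : 0 < c)
    (hflip : ∀ (x : Fin n → Bool) (i : Fin n),
      |f (Function.update x i (!(x i))) - f x| ≤ c) :
    relEnt ((Measure.pi fun _ : Fin n => bernoulliMeasure p).tilted f)
        (Measure.pi fun _ : Fin n => bernoulliMeasure p) ≤
      ENNReal.ofReal (p * (1 - p) * (((c - 1) * Real.exp c + 1) / c^2) *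
        ∫ x, ∑ i, (f (Function.update x i (!(x i))) - f x)^2
          ∂((Measure.pi fun _ : Fin n => bernoulliMeasure p).tilted f)) :=
  logSobolev_bernoulli_p_general hp0 hp1 f hflip
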